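/- (Corollary 3(a): population R-squared formula.) Fix an asset i and suppose: (a) there are b ∈ ℝ^N and random variables Φ_0, Φ_1, …, Φ_K on Ω with R_i = ∑_{j≠i} b_j·R_j + α_i·Φ_0 + ∑_{k=1}^K β_{i,k}·Φ_k − ∑_{j≠i} b_j·ε_j + ε_i pointwise; (b) each Φ_m equals g_m ∘ (F_1,…,F_K) for some Borel measurable g_m : ℝ^K → ℝ; (c) each ε_j is independent of the random vector (F_1,…,F_K); (d) E[ε_j] = 0 for all j; (e) E[ε_j·ε_l] = 0 for j ≠ l and E[ε_j²] = σ² > 0 for all j; (f) all the random variables involved are square-integrable. Then the population R-squared of the regression of R_i on its peers with coefficient vector b, defined as R² := 1 − Var(R_i − ∑_{j≠i} b_j·R_j)/Var(R_i), satisfies R² = 1 − [Var(α_i·Φ_0 + ∑_{k=1}^K β_{i,k}·Φ_k) + (1 + ‖b‖₂²)·σ²] / [Var(∑_{k=1}^K β_{i,k}·F_k) + σ²]; in particular, with b, σ² and Var(∑_k β_{i,k}·F_k) held fixed, R² is strictly decreasing in the factor-residual variance Var(α_i·Φ_0 + ∑_{k=1}^K β_{i,k}·Φ_k). -/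

import Mathlib

/-!
Each `ε j` is independent of the factor vector, hence uncorrelated with every square-integrable
Borel function of it: with the systematic part `∑ k, β i k * F k` and, by (b), with the factor
residual `α i * Φ₀ + ∑ k, β i k * Φ k`. So both variances in the R-squared split into a factor
part plus an idiosyncratic part. For `R i` the latter is `Var (ε i) = σ²`; for the regression
residual it is `Var (ε i - ∑_{j ≠ i} b j * ε j) = (1 + ‖b‖₂²) σ²`, because by (d) and (e) the
`ε j` are uncorrelated with common variance `σ²`.
-/

open MeasureTheory ProbabilityTheory Finset

section Moments

variable {Ω : Type*} [MeasurableSpace Ω] {μ : Measure Ω} {ι : Type*}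

lemma covariance_eq_zero_of_eq_comp_of_indepFun {E : Type*} [MeasurableSpace E] {X : Ω → E}
    {Y Z : Ω → ℝ} (hYX : IndepFun Y X μ) (hZX : ∃ g : E → ℝ, Measurable g ∧ ∀ ω, Z ω = g (X ω))
    (hZ : MemLp Z 2 μ) (hY : MemLp Y 2 μ) :
    cov[Z, Y; μ] = 0 := by
  obtain ⟨g, hg, hZg⟩ := hZX
  obtain rfl : Z = g ∘ X := funext hZg
  exact (hYX.comp measurable_id hg).symm.covariance_eq_zero hZ hY

lemma covariance_eq_ite_of_uncorrelated [IsProbabilityMeasure μ] [DecidableEq ι]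
    {X : ι → Ω → ℝ} {σ2 : ℝ} (hX : ∀ j, MemLp (X j) 2 μ) (hmean : ∀ j, ∫ ω, X j ω ∂μ = 0)
    (horth : ∀ j l, j ≠ l → ∫ ω, X j ω * X l ω ∂μ = 0)
    (hsq : ∀ j, ∫ ω, X j ω ^ 2 ∂μ = σ2) (j l : ι) :
    cov[X j, X l; μ] = if j = l then σ2 else 0 := by
  rw [covariance_eq_sub (hX j) (hX l), hmean, zero_mul, sub_zero]
  split_ifs with hjl
  · subst hjl
    simp only [Pi.mul_apply, ← sq, hsq]
  · exact horth j l hjl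

variable [IsFiniteMeasure μ]

lemma covariance_fun_sum_const_mul_right {Y : Ω → ℝ} {X : ι → Ω → ℝ} {s : Finset ι}
    (hX : ∀ j ∈ s, MemLp (X j) 2 μ) (hY : MemLp Y 2 μ) (c : ι → ℝ) :
    cov[Y, fun ω => ∑ j ∈ s, c j * X j ω; μ] = ∑ j ∈ s, c j * cov[Y, X j; μ] := by
  rw [covariance_fun_sum_right' (X := fun j ω => c j * X j ω)
    (fun j hj => (hX j hj).const_mul _) hY]
  simp only [covariance_const_mul_right]

lemma variance_fun_add_of_covariance_eq_zero {X Y : Ω → ℝ} (hX : MemLp X 2 μ)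
    (hY : MemLp Y 2 μ) (hXY : cov[X, Y; μ] = 0) :
    Var[fun ω => X ω + Y ω; μ] = Var[X; μ] + Var[Y; μ] := by
  rw [variance_fun_add hX hY, hXY]
  ring

variable [DecidableEq ι] {X : ι → Ω → ℝ} {σ2 : ℝ}

lemma variance_fun_sum_const_mul_of_covariance_eq_ite {s : Finset ι}
    (hX : ∀ j ∈ s, MemLp (X j) 2 μ)
    (hcov : ∀ j ∈ s, ∀ l ∈ s, cov[X j, X l; μ] = if j = l then σ2 else 0) (c : ι → ℝ) :
    Var[fun ω => ∑ j ∈ s, c j * X j ω; μ] = (∑ j ∈ s, c j ^ 2) * σ2 := by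
  rw [variance_fun_sum' (X := fun j ω => c j * X j ω) fun j hj => (hX j hj).const_mul _,
    sum_mul]
  refine sum_congr rfl fun j hj => ?_
  simp only [covariance_const_mul_left, covariance_const_mul_right]
  rw [sum_congr rfl fun l hl => by rw [hcov j hj l hl]]
  simp only [mul_ite, mul_zero, sum_ite_eq, if_pos hj]
  ring

lemma variance_sub_fun_sum_const_mul_of_covariance_eq_ite (hX : ∀ j, MemLp (X j) 2 μ)
    (hcov : ∀ j l, cov[X j, X l; μ] = if j = l then σ2 else 0) {i : ι} {s : Finset ι}
    (hi : i ∉ s) (c : ι → ℝ) :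
    Var[fun ω => X i ω - ∑ j ∈ s, c j * X j ω; μ] = (1 + ∑ j ∈ s, c j ^ 2) * σ2 := by
  have hcross : cov[X i, fun ω => ∑ j ∈ s, c j * X j ω; μ] = 0 := by
    rw [covariance_fun_sum_const_mul_right (fun j _ => hX j) (hX i)]
    refine sum_eq_zero fun j hj => ?_
    rw [hcov, if_neg (ne_of_mem_of_not_mem hj hi).symm, mul_zero]
  rw [variance_fun_sub (hX i) (memLp_finsetSum s fun j _ => (hX j).const_mul _), hcross,
    variance_fun_sum_const_mul_of_covariance_eq_ite (fun j _ => hX j)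
      (fun j _ l _ => hcov j l) c, ← covariance_self (hX i).aemeasurable, hcov, if_pos rfl]
  ring

lemma variance_fun_add_sub_fun_sum_const_mul_of_covariance_eq_zero {Y : Ω → ℝ}
    (hY : MemLp Y 2 μ) (hX : ∀ j, MemLp (X j) 2 μ)
    (hcov : ∀ j l, cov[X j, X l; μ] = if j = l then σ2 else 0) (hYX : ∀ j, cov[Y, X j; μ] = 0)
    {i : ι} {s : Finset ι} (hi : i ∉ s) (c : ι → ℝ) :
    Var[fun ω => Y ω + (X i ω - ∑ j ∈ s, c j * X j ω); μ]
      = Var[Y; μ] + (1 + ∑ j ∈ s, c j ^ 2) * σ2 := by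
  have hcX : MemLp (fun ω => ∑ j ∈ s, c j * X j ω) 2 μ :=
    memLp_finsetSum s fun j _ => (hX j).const_mul (c j)
  have hYW : cov[Y, fun ω => X i ω - ∑ j ∈ s, c j * X j ω; μ] = 0 := by
    rw [covariance_fun_sub_right hY (hX i) hcX,
      covariance_fun_sum_const_mul_right (fun j _ => hX j) hY]
    simp only [hYX, mul_zero, sum_const_zero, sub_zero]
  rw [variance_fun_add_of_covariance_eq_zero (Y := fun ω => X i ω - ∑ j ∈ s, c j * X j ω) hY
      ((hX i).sub hcX) hYW, variance_sub_fun_sum_const_mul_of_covariance_eq_ite hX hcov hi c]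

end Moments

lemma strictAnti_one_sub_add_div {a d : ℝ} (hd : 0 < d) :
    StrictAnti fun V : ℝ => 1 - (V + a) / d :=
  fun _ _ hxy => by dsimp only; gcongr

theorem sarp_population_R_squared_general
    {Ω : Type*} [MeasurableSpace Ω] (μ : Measure Ω) [IsProbabilityMeasure μ]
    {N K : ℕ}
    (F : Fin K → Ω → ℝ)
    (α : Fin (N + 1) → ℝ) (β : Fin (N + 1) → Fin K → ℝ)
    (ε : Fin (N + 1) → Ω → ℝ) (R : Fin (N + 1) → Ω → ℝ)
    (hmodel : ∀ j ω, R j ω = α j + ∑ k, β j k * F k ω + ε j ω)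
    (i : Fin (N + 1))
    (b : Fin (N + 1) → ℝ)
    (Φ₀ : Ω → ℝ) (Φ : Fin K → Ω → ℝ)
    (σ2 : ℝ) (hσ2 : 0 < σ2)
    -- (a) the return decomposition holds pointwise
    (hdecomp : ∀ ω, R i ω
      = ∑ j ∈ Finset.univ.erase i, b j * R j ω
        + α i * Φ₀ ω
        + ∑ k, β i k * Φ k ω
        - ∑ j ∈ Finset.univ.erase i, b j * ε j ω
        + ε i ω)
    -- (b) each factor residual is a Borel-measurable function of the factor vector
    (hΦ₀_meas : ∃ g : (Fin K → ℝ) → ℝ, Measurable g ∧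
      ∀ ω, Φ₀ ω = g (fun k => F k ω))
    (hΦ_meas : ∀ k, ∃ g : (Fin K → ℝ) → ℝ, Measurable g ∧
      ∀ ω, Φ k ω = g (fun k' => F k' ω))
    -- (c) each idiosyncratic risk is independent of the factor vector
    (hindep : ∀ j, IndepFun (ε j) (fun ω => (fun k => F k ω)) μ)
    -- (d) idiosyncratic risks have mean zero
    (hε_mean : ∀ j, ∫ ω, ε j ω ∂μ = 0)
    -- (e) homoskedasticity
    (hε_orth : ∀ j l, j ≠ l → ∫ ω, ε j ω * ε l ω ∂μ = 0)
    (hε_var : ∀ j, ∫ ω, (ε j ω) ^ 2 ∂μ = σ2)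
    -- (f) square integrability of all random variables involved
    (hF_L2 : ∀ k, MemLp (F k) 2 μ)
    (hΦ₀_L2 : MemLp Φ₀ 2 μ)
    (hΦ_L2 : ∀ k, MemLp (Φ k) 2 μ)
    (hε_L2 : ∀ j, MemLp (ε j) 2 μ) :
    (1 - variance (fun ω => R i ω - ∑ j ∈ Finset.univ.erase i, b j * R j ω) μ
          / variance (R i) μ
      = 1 - (variance (fun ω => α i * Φ₀ ω + ∑ k, β i k * Φ k ω) μ
              + (1 + ∑ j ∈ Finset.univ.erase i, (b j) ^ 2) * σ2)
            / (variance (fun ω => ∑ k, β i k * F k ω) μ + σ2)) ∧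
    StrictAnti (fun V : ℝ =>
      1 - (V + (1 + ∑ j ∈ Finset.univ.erase i, (b j) ^ 2) * σ2)
            / (variance (fun ω => ∑ k, β i k * F k ω) μ + σ2)) := by
  obtain ⟨g₀, hg₀, hΦ₀⟩ := hΦ₀_meas
  choose g hg hΦ using hΦ_meas
  set G := fun ω => α i * Φ₀ ω + ∑ k, β i k * Φ k ω
  set S := fun ω => ∑ k, β i k * F k ω
  have hG_comp : ∃ h : (Fin K → ℝ) → ℝ, Measurable h ∧ ∀ ω, G ω = h (fun k => F k ω) :=
    ⟨fun x => α i * g₀ x + ∑ k, β i k * g k x, by fun_prop, fun ω => by simp only [G, hΦ₀, hΦ]⟩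
  have hcovε := covariance_eq_ite_of_uncorrelated hε_L2 hε_mean hε_orth hε_var
  have hS_L2 : MemLp S 2 μ := memLp_finsetSum _ fun k _ => (hF_L2 k).const_mul _
  have hG_L2 : MemLp G 2 μ :=
    (hΦ₀_L2.const_mul _).add (memLp_finsetSum _ fun k _ => (hΦ_L2 k).const_mul _)
  have hVarR : Var[R i; μ] = Var[S; μ] + σ2 := by
    have hSε : cov[S, ε i; μ] = 0 := covariance_eq_zero_of_eq_comp_of_indepFun (hindep i)
      ⟨fun x => ∑ k, β i k * x k, by fun_prop, fun _ => rfl⟩ hS_L2 (hε_L2 i)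
    rw [show R i = fun ω => α i + (S ω + ε i ω) from funext fun ω => by rw [hmodel, add_assoc],
      variance_const_add (X := fun ω => S ω + ε i ω) (hS_L2.add (hε_L2 i)).aestronglyMeasurable,
      variance_fun_add_of_covariance_eq_zero hS_L2 (hε_L2 i) hSε,
      ← covariance_self (hε_L2 i).aemeasurable, hcovε, if_pos rfl]
  have hVarRes : Var[fun ω => R i ω - ∑ j ∈ univ.erase i, b j * R j ω; μ]
      = Var[G; μ] + (1 + ∑ j ∈ univ.erase i, b j ^ 2) * σ2 := by
    rw [show (fun ω => R i ω - ∑ j ∈ univ.erase i, b j * R j ω)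
        = fun ω => G ω + (ε i ω - ∑ j ∈ univ.erase i, b j * ε j ω) from
        funext fun ω => by rw [hdecomp ω]; ring,
      variance_fun_add_sub_fun_sum_const_mul_of_covariance_eq_zero hG_L2 hε_L2 hcovε
        (fun j => covariance_eq_zero_of_eq_comp_of_indepFun (hindep j) hG_comp hG_L2 (hε_L2 j))
        (notMem_erase i univ)]
  exact ⟨by rw [hVarR, hVarRes],
    strictAnti_one_sub_add_div (add_pos_of_nonneg_of_pos (variance_nonneg _ _) hσ2)⟩

/-- **Corollary 3(a): population R-squared formula.**
Under the assumptions of the residual variance decomposition (with `σ² > 0`), the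
population R-squared `R² := 1 - Var(R i - ∑_{j≠i} b j * R j) / Var(R i)` of the
regression of `R i` on its peers with coefficient vector `b` satisfies
`R² = 1 - [Var(α i * Φ₀ + ∑ k β i k * Φ k) + (1 + ‖b‖₂²) σ²] / [Var(∑ k β i k * F k) + σ²]`;
in particular, with `b`, `σ²` and `Var(∑ k β i k * F k)` held fixed, the map sending the
factor-residual variance `V` to `1 - (V + (1 + ‖b‖₂²) σ²) / (Var(∑ k β i k * F k) + σ²)`
is strictly decreasing. -/
theorem sarp_population_R_squared
    {Ω : Type*} [MeasurableSpace Ω] (μ : Measure Ω) [IsProbabilityMeasure μ]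
    {N K : ℕ}
    (F : Fin K → Ω → ℝ)
    (α : Fin (N + 1) → ℝ) (β : Fin (N + 1) → Fin K → ℝ)
    (ε : Fin (N + 1) → Ω → ℝ) (R : Fin (N + 1) → Ω → ℝ)
    (hmodel : ∀ j ω, R j ω = α j + ∑ k, β j k * F k ω + ε j ω)
    (i : Fin (N + 1))
    (b : Fin (N + 1) → ℝ)
    (Φ₀ : Ω → ℝ) (Φ : Fin K → Ω → ℝ)
    (σ2 : ℝ) (hσ2 : 0 < σ2)
    -- (a) the return decomposition holds pointwise
    (hdecomp : ∀ ω, R i ω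
      = ∑ j ∈ Finset.univ.erase i, b j * R j ω
        + α i * Φ₀ ω
        + ∑ k, β i k * Φ k ω
        - ∑ j ∈ Finset.univ.erase i, b j * ε j ω
        + ε i ω)
    -- (b) each factor residual is a Borel-measurable function of the factor vector
    (hΦ₀_meas : ∃ g : (Fin K → ℝ) → ℝ, Measurable g ∧
      ∀ ω, Φ₀ ω = g (fun k => F k ω))
    (hΦ_meas : ∀ k, ∃ g : (Fin K → ℝ) → ℝ, Measurable g ∧
      ∀ ω, Φ k ω = g (fun k' => F k' ω))
    -- (c) each idiosyncratic risk is independent of the factor vector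
    (hindep : ∀ j, IndepFun (ε j) (fun ω => (fun k => F k ω)) μ)
    -- (d) idiosyncratic risks have mean zero
    (hε_mean : ∀ j, ∫ ω, ε j ω ∂μ = 0)
    -- (e) homoskedasticity
    (hε_orth : ∀ j l, j ≠ l → ∫ ω, ε j ω * ε l ω ∂μ = 0)
    (hε_var : ∀ j, ∫ ω, (ε j ω) ^ 2 ∂μ = σ2)
    -- (f) square integrability of all random variables involved
    (hR_L2 : ∀ j, MemLp (R j) 2 μ)
    (hF_L2 : ∀ k, MemLp (F k) 2 μ)
    (hΦ₀_L2 : MemLp Φ₀ 2 μ)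
    (hΦ_L2 : ∀ k, MemLp (Φ k) 2 μ)
    (hε_L2 : ∀ j, MemLp (ε j) 2 μ) :
    (1 - variance (fun ω => R i ω - ∑ j ∈ Finset.univ.erase i, b j * R j ω) μ
          / variance (R i) μ
      = 1 - (variance (fun ω => α i * Φ₀ ω + ∑ k, β i k * Φ k ω) μ
              + (1 + ∑ j ∈ Finset.univ.erase i, (b j) ^ 2) * σ2)
            / (variance (fun ω => ∑ k, β i k * F k ω) μ + σ2)) ∧
    StrictAnti (fun V : ℝ =>
      1 - (V + (1 + ∑ j ∈ Finset.univ.erase i, (b j) ^ 2) * σ2)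
            / (variance (fun ω => ∑ k, β i k * F k ω) μ + σ2)) :=
  sarp_population_R_squared_general μ F α β ε R hmodel i b Φ₀ Φ σ2 hσ2 hdecomp hΦ₀_meas hΦ_meas
    hindep hε_mean hε_orth hε_var hF_L2 hΦ₀_L2 hΦ_L2 hε_L2
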